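/- For every nonnegative integer n, sum over k from 0 to n of s(n,k) * (-1)^k * k equals (-1)^n * n! * H_n, where s(n,k) are signed Stirling numbers of the first kind and H_n is the n-th harmonic number. -/
import Mathlib


/-- Unsigned Stirling numbers of the first kind. -/
def S1u : ℕ → ℕ → ℕ
  | 0, 0 => 1
  | 0, _ + 1 => 0
  | _ + 1, 0 => 0
  | n + 1, k + 1 => n * S1u n (k + 1) + S1u n k

lemma S1u_eq_zero : ∀ n k : ℕ, n < k → S1u n k = 0 := by
  intro n
  induction n with
  | zero => intro k hk; match k, hk with | k+1, _ => rfl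
  | succ m ih =>
    intro k hk
    match k, hk with
    | k+1, hk =>
      show m * S1u m (k + 1) + S1u m k = 0
      rw [ih (k+1) (by omega), ih k (by omega)]
      simp

lemma sumA : ∀ n : ℕ, ∑ k ∈ Finset.range (n+1), (S1u n k : ℚ) = Nat.factorial n := by
  intro n
  induction n with
  | zero => simp [S1u]
  | succ m ih =>
    rw [Finset.sum_range_succ' (fun k => (S1u (m+1) k : ℚ))]
    have h0 : (S1u (m+1) 0 : ℚ) = 0 := by rfl
    have hrec : ∀ k, (S1u (m+1) (k+1) : ℚ) = m * S1u m (k+1) + S1u m k := by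
      intro k; show ((m * S1u m (k + 1) + S1u m k : ℕ) : ℚ) = _; push_cast; ring
    rw [h0, add_zero]
    simp only [hrec]
    rw [Finset.sum_add_distrib, ← Finset.mul_sum]
    have h1 : ∑ k ∈ Finset.range (m+1), (S1u m (k+1) : ℚ)
        = Nat.factorial m - S1u m 0 := by
      have := Finset.sum_range_succ' (fun k => (S1u m k : ℚ)) (m+1)
      rw [Finset.sum_range_succ, S1u_eq_zero m (m+1) (by omega)] at this
      push_cast at this
      rw [add_zero] at this
      rw [ih] at this
      linarith
    rw [h1, ih]
    have hm0 : (m : ℚ) * (S1u m 0 : ℚ) = 0 := by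
      cases m with
      | zero => simp
      | succ p => have : (S1u (p+1) 0 : ℚ) = 0 := by rfl
                  rw [this, mul_zero]
    rw [Nat.factorial_succ]
    push_cast
    nlinarith [hm0]

lemma sumB : ∀ n : ℕ, ∑ k ∈ Finset.range (n+1), (S1u n k : ℚ) * k
    = Nat.factorial n * harmonic n := by
  intro n
  induction n with
  | zero => simp
  | succ m ih =>
    rw [Finset.sum_range_succ' (fun k => (S1u (m+1) k : ℚ) * k)]
    have hrec : ∀ k : ℕ, (S1u (m+1) (k+1) : ℚ) * (k+1)
        = (m : ℚ) * ((S1u m (k+1) : ℚ) * (k+1)) + ((S1u m k : ℚ) * k + S1u m k) := by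
      intro k
      have : (S1u (m+1) (k+1) : ℚ) = m * S1u m (k+1) + S1u m k := by
        show ((m * S1u m (k + 1) + S1u m k : ℕ) : ℚ) = _; push_cast; ring
      rw [this]; ring
    simp only [Nat.cast_add, Nat.cast_one] at hrec ⊢
    simp only [hrec]
    rw [Finset.sum_add_distrib, ← Finset.mul_sum, Finset.sum_add_distrib]
    have h1 : ∑ k ∈ Finset.range (m+1), (S1u m (k+1) : ℚ) * ((k:ℚ)+1)
        = Nat.factorial m * harmonic m := by
      have := Finset.sum_range_succ' (fun k => (S1u m k : ℚ) * k) (m+1)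
      rw [Finset.sum_range_succ, S1u_eq_zero m (m+1) (by omega)] at this
      push_cast at this
      simp only [mul_zero, add_zero, zero_mul] at this
      rw [ih] at this
      rw [← this]
    rw [h1, ih, sumA m]
    rw [harmonic_succ, Nat.factorial_succ]
    have hm1 : ((m:ℚ) + 1) ≠ 0 := by positivity
    push_cast
    field_simp
    ring

theorem stirling1_alternating_k_sum (n : ℕ) :
    ∑ k ∈ Finset.range (n + 1),
      ((-1 : ℚ) ^ (n - k) * S1u n k) * (-1) ^ k * k =
      (-1) ^ n * (Nat.factorial n) * harmonic n := by
  have : ∑ k ∈ Finset.range (n + 1),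
      ((-1 : ℚ) ^ (n - k) * S1u n k) * (-1) ^ k * k
      = ∑ k ∈ Finset.range (n + 1), (-1 : ℚ) ^ n * ((S1u n k : ℚ) * k) := by
    apply Finset.sum_congr rfl
    intro k hk
    have hkn : k ≤ n := by
      have := Finset.mem_range.mp hk; omega
    have hp : (-1 : ℚ) ^ (n - k) * (-1) ^ k = (-1) ^ n := by
      rw [← pow_add, Nat.sub_add_cancel hkn]
    calc ((-1 : ℚ) ^ (n - k) * S1u n k) * (-1) ^ k * k
        = ((-1 : ℚ) ^ (n - k) * (-1) ^ k) * ((S1u n k : ℚ) * k) := by ring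
      _ = (-1 : ℚ) ^ n * ((S1u n k : ℚ) * k) := by rw [hp]
  rw [this, ← Finset.mul_sum, sumB n, mul_assoc]
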